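/- If a subset Y of X can be partitioned into at most n thin subsets, then |Δ_p(Y)| ≤ n for every p ∈ X^#. -/

import Mathlib

open Metric Bornology Set

variable {X : Type*} [MetricSpace X]

/-- `B(A,r) = ⋃_{a∈A} B(a,r)` where `B(a,r)` is the closed ball of radius `r`. -/
def ballU (A : Set X) (r : ℝ) : Set X := ⋃ a ∈ A, Metric.closedBall a r

/-- `X^#`: the set of ultrafilters on `X` all of whose members are unbounded. -/
def sharp (X : Type*) [MetricSpace X] : Set (Ultrafilter X) :=
  {p | ∀ P ∈ p, ¬ Bornology.IsBounded P}

/-- Parallelity: `p ∥ q` iff there is `r ≥ 0` with `B(Q,r) ∈ p` for every `Q ∈ q`. -/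
def Par (p q : Ultrafilter X) : Prop :=
  ∃ r : ℝ, 0 ≤ r ∧ ∀ Q ∈ q, ballU Q r ∈ p

/-- `p̆ = {q ∈ X^# : q ∥ p}`. -/
def pbreve (p : Ultrafilter X) : Set (Ultrafilter X) :=
  {q | q ∈ sharp X ∧ Par q p}

/-- The `p`-companion `Δ_p(Y) = {q ∈ X^# : Y ∈ q, q ∥ p}`. -/
def Delta (p : Ultrafilter X) (Y : Set X) : Set (Ultrafilter X) :=
  {q | q ∈ sharp X ∧ Y ∈ q ∧ Par q p}

/-- A set `S ⊆ X^#` is invariant if `p ∈ S`, `q ∈ X^#`, `q ∥ p` imply `q ∈ S`. -/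
def Invt (S : Set (Ultrafilter X)) : Prop :=
  ∀ p ∈ S, ∀ q, q ∈ sharp X → Par q p → q ∈ S

/-- `Y` is large if `X = B(Y,r)` for some `r ≥ 0`. -/
def Large (Y : Set X) : Prop := ∃ r : ℝ, 0 ≤ r ∧ ballU Y r = Set.univ

/-- `Y` is thick if for every `r ≥ 0` there is `y ∈ Y` with `B(y,r) ⊆ Y`. -/
def Thick (Y : Set X) : Prop := ∀ r : ℝ, 0 ≤ r → ∃ y ∈ Y, Metric.closedBall y r ⊆ Y

/-- `Y` is prethick if `B(Y,r)` is thick for some `r ≥ 0`. -/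
def Prethick (Y : Set X) : Prop := ∃ r : ℝ, 0 ≤ r ∧ Thick (ballU Y r)

/-- `Y` is small if `(X∖Y) ∩ L` is large for every large `L`. -/
def SmallSet (Y : Set X) : Prop := ∀ L : Set X, Large L → Large (Yᶜ ∩ L)

/-- `Y` is thin if for each `r ≥ 0` there is a bounded `V` with
`B(y,r) ∩ Y = {y}` for all `y ∈ Y∖V`. -/
def Thin (Y : Set X) : Prop :=
  ∀ r : ℝ, 0 ≤ r → ∃ V : Set X, Bornology.IsBounded V ∧
    ∀ y ∈ Y \ V, Metric.closedBall y r ∩ Y = {y}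

/-- `Y` is `n`-thin if for each `r ≥ 0` there is a bounded `V` with
`|B(y,r) ∩ Y| ≤ n` for all `y ∈ Y∖V`. -/
def NThin (n : ℕ) (Y : Set X) : Prop :=
  ∀ r : ℝ, 0 ≤ r → ∃ V : Set X, Bornology.IsBounded V ∧
    ∀ y ∈ Y \ V, (Metric.closedBall y r ∩ Y).encard ≤ n

/-- `M` is a minimal nonempty closed invariant subset of `X^#`
(closures/closedness taken in the Stone topology on ultrafilters). -/
def MinCI (M : Set (Ultrafilter X)) : Prop :=
  M ⊆ sharp X ∧ M.Nonempty ∧ IsClosed M ∧ Invt M ∧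
    ∀ S ⊆ M, S.Nonempty → IsClosed S → Invt S → S = M

/-! Two parallel ultrafilters `q₁ ∈ X^#` and `q₂` containing the same thin set `T` coincide:
if `B(Q,r) ∈ q₂` for all `Q ∈ q₁`, let `V` be the bounded set that thinness gives for the
radius `r`. For `A ∈ q₁` the set `Q = (T ∩ A) ∖ V` lies in `q₁`, and every point of `T` within
`r` of `Q` is a point of `Q`, so `A ⊇ B(Q,r) ∩ T ∈ q₂`. As `∥` is an equivalence relation,
`Δ_p(T)` has at most one point for thin `T`; and an ultrafilter containing `⋃ i, f i` contains
some `f i`, so `Δ_p(⋃ i, f i)` is covered by the `n` sets `Δ_p(f i)`. -/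

lemma mem_ballU {A : Set X} {r : ℝ} {x : X} :
    x ∈ ballU A r ↔ ∃ a ∈ A, dist x a ≤ r := by
  simp [ballU]

lemma ballU_ballU_subset (A : Set X) (r s : ℝ) : ballU (ballU A r) s ⊆ ballU A (r + s) := by
  intro x hx
  obtain ⟨a, ha, hxa⟩ := mem_ballU.1 hx
  obtain ⟨b, hb, hab⟩ := mem_ballU.1 ha
  refine mem_ballU.2 ⟨b, hb, ?_⟩
  calc dist x b ≤ dist x a + dist a b := dist_triangle _ _ _
    _ ≤ r + s := by linarith

lemma disjoint_ballU_compl_ballU (A : Set X) (r : ℝ) : Disjoint (ballU (ballU A r)ᶜ r) A := by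
  rw [Set.disjoint_left]
  intro x hx hxA
  obtain ⟨a, ha, hxa⟩ := mem_ballU.1 hx
  exact ha (mem_ballU.2 ⟨x, hxA, by rwa [dist_comm]⟩)

lemma ballU_mem_symm {p q : Ultrafilter X} {r : ℝ} (h : ∀ Q ∈ p, ballU Q r ∈ q) :
    ∀ Q ∈ q, ballU Q r ∈ p := by
  intro Q hQ
  by_contra hQp
  have hcompl : ballU (ballU Q r)ᶜ r ∈ q := h _ (Ultrafilter.compl_mem_iff_notMem.2 hQp)
  exact Ultrafilter.empty_notMem <|
    (disjoint_ballU_compl_ballU Q r).inter_eq ▸ Filter.inter_mem hcompl hQ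

lemma Par.symm {p q : Ultrafilter X} : Par p q → Par q p
  | ⟨r, hr, h⟩ => ⟨r, hr, ballU_mem_symm h⟩

lemma Par.trans {p q s : Ultrafilter X} : Par p q → Par q s → Par p s
  | ⟨r, hr, hpq⟩, ⟨t, ht, hqs⟩ =>
    ⟨t + r, add_nonneg ht hr, fun Q hQ =>
      Filter.mem_of_superset (hpq _ (hqs Q hQ)) (ballU_ballU_subset Q t r)⟩

lemma ballU_inter_subset_of_thin {T V Q : Set X} {r : ℝ}
    (hV : ∀ y ∈ T \ V, closedBall y r ∩ T = {y}) (hQ : Q ⊆ T \ V) : ballU Q r ∩ T ⊆ Q := by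
  rintro x ⟨hx, hxT⟩
  obtain ⟨y, hy, hxy⟩ := mem_ballU.1 hx
  have hxy : x ∈ closedBall y r ∩ T := ⟨hxy, hxT⟩
  rw [hV y (hQ hy), mem_singleton_iff] at hxy
  exact hxy ▸ hy

lemma Thin.eq_of_par {T : Set X} (hT : Thin T) {q₁ q₂ : Ultrafilter X} (hq₁ : q₁ ∈ sharp X)
    (hT₁ : T ∈ q₁) (hT₂ : T ∈ q₂) (hpar : Par q₂ q₁) : q₁ = q₂ := by
  obtain ⟨r, hr, hball⟩ := hpar
  obtain ⟨V, hVb, hV⟩ := hT r hr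
  have hVc : Vᶜ ∈ q₁ := Ultrafilter.compl_mem_iff_notMem.2 fun hV₁ => hq₁ V hV₁ hVb
  refine (Ultrafilter.eq_of_le fun A hA => ?_).symm
  have hQ : T ∩ A ∩ Vᶜ ∈ q₁ := Filter.inter_mem (Filter.inter_mem hT₁ hA) hVc
  have hsub : ballU (T ∩ A ∩ Vᶜ) r ∩ T ⊆ A :=
    (ballU_inter_subset_of_thin hV fun y hy => ⟨hy.1.1, hy.2⟩).trans fun y hy => hy.1.2
  exact Filter.mem_of_superset (Filter.inter_mem (hball _ hQ) hT₂) hsub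

lemma Thin.delta_subsingleton {T : Set X} (hT : Thin T) (p : Ultrafilter X) :
    (Delta p T).Subsingleton := by
  rintro q₁ ⟨hq₁, hT₁, hp₁⟩ q₂ ⟨-, hT₂, hp₂⟩
  exact hT.eq_of_par hq₁ hT₁ hT₂ (hp₂.trans hp₁.symm)

lemma delta_iUnion_subset {ι : Type*} [Finite ι] (p : Ultrafilter X) (f : ι → Set X) :
    Delta p (⋃ i, f i) ⊆ ⋃ i, Delta p (f i) := by
  rintro q ⟨hq, hf, hpar⟩
  obtain ⟨i, hi⟩ :=
    Ultrafilter.eventually_exists_iff.1 (Filter.mem_of_superset hf fun _ => mem_iUnion.1)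
  exact mem_iUnion.2 ⟨i, hq, hi, hpar⟩

lemma encard_iUnion_le_card_of_subsingleton {α ι : Type*} [Fintype ι] {s : ι → Set α}
    (hs : ∀ i, (s i).Subsingleton) : (⋃ i, s i).encard ≤ Fintype.card ι := by
  calc (⋃ i, s i).encard ≤ ∑ i, (s i).encard := encard_iUnion_le_of_fintype s
    _ ≤ ∑ _i : ι, 1 := Finset.sum_le_sum fun i _ => encard_le_one_iff_subsingleton.2 (hs i)
    _ = Fintype.card ι := by simp

theorem stmt16_general (Y : Set X) (n : ℕ)
    (f : Fin n → Set X) (hthin : ∀ i, Thin (f i))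
    (hY : Y = ⋃ i, f i) :
    ∀ p ∈ sharp X, (Delta p Y).encard ≤ n := by
  intro p _
  subst hY
  calc (Delta p (⋃ i, f i)).encard ≤ (⋃ i, Delta p (f i)).encard :=
        encard_le_encard (delta_iUnion_subset p f)
    _ ≤ Fintype.card (Fin n) :=
        encard_iUnion_le_card_of_subsingleton fun i => (hthin i).delta_subsingleton p
    _ = n := by simp

theorem stmt16 (hX : ¬ Bornology.IsBounded (Set.univ : Set X)) (Y : Set X) (n : ℕ)
    (f : Fin n → Set X) (hthin : ∀ i, Thin (f i))
    (hdisj : Pairwise (Function.onFun Disjoint f))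
    (hY : Y = ⋃ i, f i) :
    ∀ p ∈ sharp X, (Delta p Y).encard ≤ n :=
  stmt16_general Y n f hthin hY
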